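/- Let r ≥ 1, n ≥ 3r, n ≡ r (mod 2). The graph C(n,r) = K₃ * ((r−1)K₃ ⊎ ((n−3r)/2)K₂) is well covered: every maximal independent set of C(n,r) has the same cardinality. -/

import Mathlib

attribute [local instance] Classical.propDecidable

/-- `s` is an independent set of vertices of `G`. -/
def IsIndep {V : Type*} (G : SimpleGraph V) (s : Finset V) : Prop :=
  ∀ u ∈ s, ∀ v ∈ s, ¬ G.Adj u v

/-- `s` is a maximal independent set of vertices of `G`. -/
def IsMaxlIndep {V : Type*} (G : SimpleGraph V) (s : Finset V) : Prop :=
  IsIndep G s ∧ ∀ t : Finset V, IsIndep G t → s ⊆ t → s = t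

/-- `m(G)`: the number of maximal independent sets of `G`. -/
noncomputable def numMaxlIndep {V : Type*} [Fintype V] (G : SimpleGraph V) : ℕ :=
  Set.ncard {s : Finset V | IsMaxlIndep G s}

/-- Component label for `C(n,r)`: vertices `0,1,2` form the central triangle,
vertices `3,…,3r-1` form `r-1` triangles, and vertices `3r,…,n-1` form
`(n-3r)/2` disjoint edges. -/
def CnrLabel (r i : ℕ) : ℕ :=
  if i < 3 then 0 else if i < 3 * r then 1 + (i - 3) / 3 else r + (i - 3 * r) / 2

/-- `i` is the vertex of its component joined to the distinguished vertex
`v₀ = 0` of the central triangle. -/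
def CnrAnchor (r i : ℕ) : Prop :=
  (3 ≤ i ∧ i < 3 * r ∧ i % 3 = 0) ∨ (3 * r ≤ i ∧ (i - 3 * r) % 2 = 0)

/-- The graph `C(n,r) = K₃ * ((r-1)K₃ ⊎ ((n-3r)/2)K₂)` on `Fin n`. -/
def Cnr (n r : ℕ) : SimpleGraph (Fin n) where
  Adj a b := a ≠ b ∧
    (CnrLabel r (a : ℕ) = CnrLabel r (b : ℕ) ∨
      ((a : ℕ) = 0 ∧ CnrAnchor r (b : ℕ)) ∨
      ((b : ℕ) = 0 ∧ CnrAnchor r (a : ℕ)))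
  symm := ⟨by
    rintro a b ⟨h1, h2 | h2 | h2⟩
    · exact ⟨h1.symm, Or.inl h2.symm⟩
    · exact ⟨h1.symm, Or.inr (Or.inr h2)⟩
    · exact ⟨h1.symm, Or.inr (Or.inl h2)⟩⟩
  loopless := ⟨by rintro a ⟨h1, _⟩; exact h1 rfl⟩

/-
Each component label of `C(n,r)` picks out a clique, and every such clique contains a vertex
(any vertex other than `0` and the anchors) all of whose neighbours lie in the same clique.
A maximal independent set meets each clique at most once by independence, and at least once
by maximality, since otherwise the private vertex could be added. Hence every maximal
independent set has exactly one vertex per label.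
-/

section WellCovered

variable {V ι : Type*} {G : SimpleGraph V} {s : Finset V}

theorem IsMaxlIndep.exists_adj_of_notMem (hs : IsMaxlIndep G s) {w : V} (hw : w ∉ s) :
    ∃ u ∈ s, G.Adj w u := by
  by_contra! hnadj
  have hins : IsIndep G (insert w s) := by
    intro u hu v hv
    rcases Finset.mem_insert.mp hu with rfl | hu' <;> rcases Finset.mem_insert.mp hv with rfl | hv'
    · exact G.loopless.irrefl _
    · exact hnadj v hv'
    · exact fun h => hnadj u hu' h.symm
    · exact hs.1 u hu' v hv'
  exact hw (hs.2 _ hins (Finset.subset_insert w s) ▸ Finset.mem_insert_self w s)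

theorem IsIndep.injOn {f : V → ι} (hs : IsIndep G s)
    (hclique : ∀ u v, u ≠ v → f u = f v → G.Adj u v) : Set.InjOn f s := by
  intro u hu v hv huv
  by_contra hne
  exact hs u hu v hv (hclique u v hne huv)

theorem IsMaxlIndep.card_eq_card_image_univ [Fintype V] [DecidableEq ι] (f : V → ι)
    (hclique : ∀ u v, u ≠ v → f u = f v → G.Adj u v)
    (hsimplicial : ∀ v, ∃ w, f w = f v ∧ ∀ u, G.Adj w u → f u = f w)
    (hs : IsMaxlIndep G s) : s.card = (Finset.univ.image f).card := by
  have hcover : s.image f = Finset.univ.image f := by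
    refine Finset.Subset.antisymm (Finset.image_subset_image (Finset.subset_univ s)) ?_
    simp only [Finset.subset_iff, Finset.mem_image, Finset.mem_univ, true_and]
    rintro _ ⟨v, rfl⟩
    obtain ⟨w, hwv, hw⟩ := hsimplicial v
    by_cases hws : w ∈ s
    · exact ⟨w, hws, hwv⟩
    · obtain ⟨u, hus, hwu⟩ := hs.exists_adj_of_notMem hws
      exact ⟨u, hus, (hw u hwu).trans hwv⟩
  rw [← hcover, Finset.card_image_of_injOn (hs.1.injOn hclique)]

end WellCovered

namespace Cnr

theorem adj_of_label_eq {n r : ℕ} {u v : Fin n} (hne : u ≠ v)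
    (h : CnrLabel r u = CnrLabel r v) : (Cnr n r).Adj u v :=
  ⟨hne, Or.inl h⟩

theorem label_eq_of_adj {n r : ℕ} {w u : Fin n} (hw0 : (w : ℕ) ≠ 0)
    (hwa : ¬ CnrAnchor r w) (h : (Cnr n r).Adj w u) : CnrLabel r u = CnrLabel r w := by
  obtain ⟨-, h | h | h⟩ := h
  · exact h.symm
  · exact absurd h.1 hw0
  · exact absurd h.2 hwa

/-- Witnesses: `1` in the central triangle, the middle vertex of the other triangles, the
non-anchor end of each edge. -/
theorem exists_private_vertex {n r : ℕ} (hn : 3 * r ≤ n) (hpar : n % 2 = r % 2)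
    {v : ℕ} (hv : v < n) :
    ∃ w < n, w ≠ 0 ∧ ¬ CnrAnchor r w ∧ CnrLabel r w = CnrLabel r v := by
  unfold CnrAnchor CnrLabel
  by_cases h3 : v < 3
  · exact ⟨1, by omega, by omega, by omega, by split_ifs <;> omega⟩
  by_cases h3r : v < 3 * r
  · exact ⟨v - v % 3 + 1, by omega, by omega, by omega, by split_ifs <;> omega⟩
  · exact ⟨v - (v - 3 * r) % 2 + 1, by omega, by omega, by omega, by split_ifs <;> omega⟩

end Cnr

theorem stmt16_general (n r : ℕ) (hn : 3 * r ≤ n) (hpar : n % 2 = r % 2) :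
    ∀ s t : Finset (Fin n),
      IsMaxlIndep (Cnr n r) s → IsMaxlIndep (Cnr n r) t → s.card = t.card := by
  have hsimplicial (v : Fin n) : ∃ w : Fin n, CnrLabel r w = CnrLabel r v ∧
      ∀ u, (Cnr n r).Adj w u → CnrLabel r u = CnrLabel r w := by
    obtain ⟨w, hwn, hw0, hwa, hwv⟩ := Cnr.exists_private_vertex hn hpar v.isLt
    exact ⟨⟨w, hwn⟩, hwv, fun u => Cnr.label_eq_of_adj hw0 hwa⟩
  intro s t hs ht
  rw [hs.card_eq_card_image_univ _ (fun _ _ => Cnr.adj_of_label_eq) hsimplicial,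
    ht.card_eq_card_image_univ _ (fun _ _ => Cnr.adj_of_label_eq) hsimplicial]

/-- `C(n,r)` is well covered: all of its maximal independent sets have the
same cardinality. -/
theorem stmt16 (n r : ℕ) (hr : 1 ≤ r) (hn : 3 * r ≤ n) (hpar : n % 2 = r % 2) :
    ∀ s t : Finset (Fin n),
      IsMaxlIndep (Cnr n r) s → IsMaxlIndep (Cnr n r) t → s.card = t.card :=
  stmt16_general n r hn hpar
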